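/- arXiv:2209.13798 — 2 statements merged into one kernel-verified Lean document; each statement's English description precedes it below -/
import Mathlib

section
/- Let d > 1 be an integer and A = (a_0, …, a_k) a d-collection (with a_k ≠ 0) such that a_i ≥ d − 1 for every index i < k. Then span_d(A) equals the full integer interval {0, 1, …, sum_d(A)}, where sum_d(A) = Σ_{i=0}^{k} a_i·d^i. -/
/-- The span of a `d`-collection `A : ℕ →₀ ℕ` (where `A i` is the multiplicity of the
token `d ^ i`): the set of all sums `∑ i, c i * d ^ i` over sub-collections `c ≤ A`. -/
def dspan (d : ℕ) (A : ℕ →₀ ℕ) : Set ℕ :=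
  {n : ℕ | ∃ c : ℕ →₀ ℕ, (∀ i, c i ≤ A i) ∧ n = c.sum (fun i m => m * d ^ i)}

/-- The total sum `∑ i, a_i * d ^ i` of a `d`-collection. -/
def dsum (d : ℕ) (A : ℕ →₀ ℕ) : ℕ := A.sum (fun i m => m * d ^ i)

/-- Elementary exchange at index `i`: replace `d` tokens `d ^ i` by one token `d ^ (i+1)`. -/
noncomputable def exch (d i : ℕ) (A : ℕ →₀ ℕ) : ℕ →₀ ℕ :=
  A - Finsupp.single i d + Finsupp.single (i + 1) 1

/-!
Write `A = B + single k a_k` with `B = A.erase k`. Since `a_i ≥ d - 1` for `i < k`, the geometric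
bound gives `sum_d(B) ≥ d ^ k - 1`, so consecutive multiples `q * d ^ k` (`q ≤ a_k`) are at most
`sum_d(B) + 1` apart, and their translates of `span_d(B)`, an interval by induction on `k`, cover
`[0, sum_d(A)]`.
-/

open Set

lemma dsum_add (d : ℕ) (A B : ℕ →₀ ℕ) : dsum d (A + B) = dsum d A + dsum d B :=
  Finsupp.sum_add_index' (fun _ => zero_mul _) fun _ _ _ => add_mul _ _ _

lemma dsum_single (d j m : ℕ) : dsum d (Finsupp.single j m) = m * d ^ j :=
  Finsupp.sum_single_index (zero_mul _)

lemma dsum_eq_dsum_erase_add (d j : ℕ) (A : ℕ →₀ ℕ) :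
    dsum d A = dsum d (A.erase j) + A j * d ^ j := by
  conv_lhs => rw [← Finsupp.erase_add_single j A]
  rw [dsum_add, dsum_single]

lemma dsum_mono (d : ℕ) {c A : ℕ →₀ ℕ} (h : c ≤ A) : dsum d c ≤ dsum d A := by
  rw [← add_tsub_cancel_of_le h, dsum_add]
  exact Nat.le_add_right _ _

lemma pow_le_dsum_add_one (d m : ℕ) (A : ℕ →₀ ℕ) (hlow : ∀ i < m, d - 1 ≤ A i) :
    d ^ m ≤ dsum d A + 1 := by
  induction m generalizing A with
  | zero => simp
  | succ m ih =>
    have herase : d ^ m ≤ dsum d (A.erase m) + 1 :=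
      ih _ fun i hi => by rw [Finsupp.erase_ne hi.ne]; exact hlow i (by omega)
    calc d ^ (m + 1) ≤ (d - 1 + 1) * d ^ m := by
          rw [pow_succ']; exact Nat.mul_le_mul_right _ le_tsub_add
      _ = d ^ m + (d - 1) * d ^ m := by ring
      _ ≤ dsum d (A.erase m) + 1 + A m * d ^ m :=
          Nat.add_le_add herase (Nat.mul_le_mul_right _ (hlow m m.lt_succ_self))
      _ = dsum d A + 1 := by rw [dsum_eq_dsum_erase_add d m A]; ring

lemma dspan_subset_Iic_dsum (d : ℕ) (A : ℕ →₀ ℕ) : dspan d A ⊆ Iic (dsum d A) := by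
  rintro _ ⟨c, hc, rfl⟩
  exact dsum_mono d (Finsupp.le_def.mpr hc)

lemma add_mem_dspan_add {d n n' : ℕ} {A B : ℕ →₀ ℕ} (hn : n ∈ dspan d A) (hn' : n' ∈ dspan d B) :
    n + n' ∈ dspan d (A + B) := by
  obtain ⟨c, hc, rfl⟩ := hn
  obtain ⟨c', hc', rfl⟩ := hn'
  exact ⟨c + c', fun i => Nat.add_le_add (hc i) (hc' i), (dsum_add d c c').symm⟩

lemma mul_pow_mem_dspan_single {d j q a : ℕ} (hq : q ≤ a) :
    q * d ^ j ∈ dspan d (Finsupp.single j a) := by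
  refine ⟨Finsupp.single j q, fun i => ?_, (dsum_single d j q).symm⟩
  rcases eq_or_ne j i with rfl | hij
  · simpa using hq
  · simp [hij]

lemma Nat.exists_eq_add_mul_of_le_add_mul {S D n : ℕ} (a : ℕ) (hD : D ≤ S + 1)
    (hn : n ≤ S + a * D) : ∃ q ≤ a, ∃ r ≤ S, n = r + q * D := by
  induction a with
  | zero => exact ⟨0, le_rfl, n, by simpa using hn, by simp⟩
  | succ a ih =>
    by_cases h : n ≤ S + a * D
    · obtain ⟨q, hq, r, hr, rfl⟩ := ih h
      exact ⟨q, hq.trans a.le_succ, r, hr, rfl⟩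
    · rw [Nat.add_one_mul] at hn
      refine ⟨a + 1, le_rfl, n - (a * D + D), by omega, ?_⟩
      rw [Nat.add_one_mul]
      omega

lemma Iic_dsum_add_single_subset_dspan {d j : ℕ} {A : ℕ →₀ ℕ}
    (hA : Iic (dsum d A) ⊆ dspan d A) (hj : d ^ j ≤ dsum d A + 1) (a : ℕ) :
    Iic (dsum d (A + Finsupp.single j a)) ⊆ dspan d (A + Finsupp.single j a) := by
  intro n hn
  rw [mem_Iic, dsum_add, dsum_single] at hn
  obtain ⟨q, hq, r, hr, rfl⟩ := Nat.exists_eq_add_mul_of_le_add_mul a hj hn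
  exact add_mem_dspan_add (hA hr) (mul_pow_mem_dspan_single hq)

lemma Iic_dsum_subset_dspan (d k : ℕ) (A : ℕ →₀ ℕ) (hsupp : ∀ i, A i ≠ 0 → i ≤ k)
    (hlow : ∀ i < k, d - 1 ≤ A i) : Iic (dsum d A) ⊆ dspan d A := by
  induction k generalizing A with
  | zero =>
    have hA : A.erase 0 = 0 := by
      ext i
      rcases eq_or_ne i 0 with rfl | hi
      · exact Finsupp.erase_same
      · rw [Finsupp.erase_ne hi]
        by_contra h
        exact hi (Nat.le_zero.mp (hsupp i h))
    rw [← Finsupp.erase_add_single 0 A, hA]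
    refine Iic_dsum_add_single_subset_dspan ?_ (by simp) _
    intro n hn
    exact ⟨0, fun _ => le_rfl, by simpa [dsum] using hn⟩
  | succ k ih =>
    rw [← Finsupp.erase_add_single (k + 1) A]
    have hlow' : ∀ i < k + 1, d - 1 ≤ A.erase (k + 1) i :=
      fun i hi => by rw [Finsupp.erase_ne hi.ne]; exact hlow i hi
    refine Iic_dsum_add_single_subset_dspan (ih _ ?_ fun i hi => hlow' i (by omega))
      (pow_le_dsum_add_one d _ _ hlow') _
    intro i hi
    rcases eq_or_ne i (k + 1) with rfl | hik
    · exact absurd Finsupp.erase_same hi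
    · rw [Finsupp.erase_ne hik] at hi
      have := hsupp i hi
      omega

theorem stmt_4_general (d : ℕ) (A : ℕ →₀ ℕ) (k : ℕ)
    (hsupp : ∀ i, A i ≠ 0 → i ≤ k) (hlow : ∀ i < k, d - 1 ≤ A i) :
    dspan d A = Set.Iic (dsum d A) :=
  (dspan_subset_Iic_dsum d A).antisymm (Iic_dsum_subset_dspan d k A hsupp hlow)

/-- If `a_i ≥ d - 1` for every `i < k` (with top index `k`, `a_k ≠ 0`), then the span is
the whole interval `{0, 1, …, sum_d(A)}`. -/
theorem stmt_4 (d : ℕ) (hd : 1 < d) (A : ℕ →₀ ℕ) (k : ℕ) (hk : A k ≠ 0)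
    (hsupp : ∀ i, A i ≠ 0 → i ≤ k) (hlow : ∀ i < k, d - 1 ≤ A i) :
    dspan d A = Set.Iic (dsum d A) :=
  stmt_4_general d A k hsupp hlow
end

section
/- Let d > 1 be an integer. For every d-collection A there exists a normal d-collection B that is obtained from A by a finite sequence of proper elementary exchanges; in particular span_d(A) = span_d(B). -/
lemma sum_addsingle (X : ℕ →₀ ℕ) (k m : ℕ) (f : ℕ → ℕ → ℕ)
    (h0 : ∀ j, f j 0 = 0) (hadd : ∀ j a b, f j (a + b) = f j a + f j b) :
    (X + Finsupp.single k m).sum f = X.sum f + f k m := by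
  rw [Finsupp.sum_add_index' h0 hadd, Finsupp.sum_single_index (h0 k)]

lemma sum_split (X : ℕ →₀ ℕ) (i n : ℕ) (h : n ≤ X i) (f : ℕ → ℕ → ℕ)
    (h0 : ∀ j, f j 0 = 0) (hadd : ∀ j a b, f j (a + b) = f j a + f j b) :
    X.sum f = (X - Finsupp.single i n).sum f + f i n := by
  conv_lhs => rw [← tsub_add_cancel_of_le (Finsupp.single_le_iff.mpr h)]
  exact sum_addsingle _ _ _ f h0 hadd

lemma move_apply (X : ℕ →₀ ℕ) (i n k m j : ℕ) :
    (X - Finsupp.single i n + Finsupp.single k m) j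
      = (X j - (if i = j then n else 0)) + (if k = j then m else 0) := by
  rw [Finsupp.add_apply, Finsupp.tsub_apply, Finsupp.single_apply, Finsupp.single_apply]

lemma exch_apply (d i : ℕ) (X : ℕ →₀ ℕ) (j : ℕ) :
    exch d i X j = (X j - (if i = j then d else 0)) + (if i + 1 = j then 1 else 0) :=
  move_apply X i d (i+1) 1 j

lemma sum_move (X : ℕ →₀ ℕ) (i n k m : ℕ) (h : n ≤ X i) (f : ℕ → ℕ → ℕ)
    (h0 : ∀ j, f j 0 = 0) (hadd : ∀ j a b, f j (a + b) = f j a + f j b) :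
    (X - Finsupp.single i n + Finsupp.single k m).sum f + f i n = X.sum f + f k m := by
  rw [sum_addsingle _ _ _ f h0 hadd, sum_split X i n h f h0 hadd]
  ring

lemma sum_move_F (d : ℕ) (X : ℕ →₀ ℕ) (i n k m : ℕ) (h : n ≤ X i)
    (hval : n * d ^ i = m * d ^ k) :
    (X - Finsupp.single i n + Finsupp.single k m).sum (fun j m => m * d ^ j)
      = X.sum (fun j m => m * d ^ j) := by
  have := sum_move X i n k m h (fun j m => m * d ^ j)
    (fun _ => zero_mul _) (fun _ _ _ => add_mul _ _ _)
  omega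


lemma exch_apply_self (d i : ℕ) (X : ℕ →₀ ℕ) : exch d i X i = X i - d := by
  rw [exch_apply]; simp

lemma exch_apply_succ (d i : ℕ) (X : ℕ →₀ ℕ) : exch d i X (i + 1) = X (i + 1) + 1 := by
  rw [exch_apply, if_neg (by omega), if_pos rfl]; omega

lemma exch_apply_ne (d i j : ℕ) (X : ℕ →₀ ℕ) (h1 : i ≠ j) (h2 : i + 1 ≠ j) :
    exch d i X j = X j := by
  rw [exch_apply, if_neg h1, if_neg h2]; omega

lemma move_apply_fst (X : ℕ →₀ ℕ) (i n k m : ℕ) (h : i ≠ k) :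
    (X - Finsupp.single i n + Finsupp.single k m) i = X i - n := by
  rw [move_apply, if_pos rfl, if_neg (by omega)]; omega

lemma move_apply_snd (X : ℕ →₀ ℕ) (i n k m : ℕ) (h : i ≠ k) :
    (X - Finsupp.single i n + Finsupp.single k m) k = X k + m := by
  rw [move_apply, if_neg h, if_pos rfl]; omega

lemma move_apply_ne (X : ℕ →₀ ℕ) (i n k m j : ℕ) (h1 : i ≠ j) (h2 : k ≠ j) :
    (X - Finsupp.single i n + Finsupp.single k m) j = X j := by
  rw [move_apply, if_neg h1, if_neg h2]; omega

lemma dspan_exch (d i : ℕ) (hd : 1 < d) (X : ℕ →₀ ℕ) (hi : 2 * (d - 1) < X i) :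
    dspan d X = dspan d (exch d i X) := by
  have hdle : d ≤ X i := by omega
  have hne : i ≠ i + 1 := by omega
  have hval : d * d ^ i = 1 * d ^ (i + 1) := by rw [one_mul, pow_succ]; ring
  ext n
  constructor
  · rintro ⟨c, hc, rfl⟩
    by_cases h : c i ≤ X i - d
    · refine ⟨c, fun j => ?_, rfl⟩
      rcases eq_or_ne i j with rfl | h1
      · rw [exch_apply_self]; omega
      · rcases eq_or_ne (i + 1) j with rfl | h2
        · rw [exch_apply_succ]; have := hc (i + 1); omega
        · rw [exch_apply_ne d i j X h1 h2]; exact hc j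
    · have hci : d ≤ c i := by have := hc i; omega
      refine ⟨exch d i c, fun j => ?_, (sum_move_F d c i d (i+1) 1 hci hval).symm⟩
      rcases eq_or_ne i j with rfl | h1
      · rw [exch_apply_self, exch_apply_self]; have := hc i; omega
      · rcases eq_or_ne (i + 1) j with rfl | h2
        · rw [exch_apply_succ, exch_apply_succ]; have := hc (i + 1); omega
        · rw [exch_apply_ne d i j c h1 h2, exch_apply_ne d i j X h1 h2]; exact hc j
  · rintro ⟨c, hc, rfl⟩
    have h1 := hc i; rw [exch_apply_self] at h1
    have h2 := hc (i + 1); rw [exch_apply_succ] at h2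
    by_cases h : c (i + 1) ≤ X (i + 1)
    · refine ⟨c, fun j => ?_, rfl⟩
      rcases eq_or_ne i j with rfl | g1
      · omega
      · rcases eq_or_ne (i + 1) j with rfl | g2
        · exact h
        · have := hc j; rwa [exch_apply_ne d i j X g1 g2] at this
    · have hc1 : 1 ≤ c (i + 1) := by omega
      refine ⟨c - Finsupp.single (i+1) 1 + Finsupp.single i d, fun j => ?_,
        (sum_move_F d c (i+1) 1 i d hc1 hval.symm).symm⟩
      rcases eq_or_ne i j with rfl | g1
      · rw [move_apply_snd c (i+1) 1 i d hne.symm]; omega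
      · rcases eq_or_ne (i + 1) j with rfl | g2
        · rw [move_apply_fst c (i+1) 1 i d hne.symm]; omega
        · rw [move_apply_ne c (i+1) 1 i d j g2 g1]
          have := hc j; rwa [exch_apply_ne d i j X g1 g2] at this

/-- Every `d`-collection can be turned into a normal one by finitely many proper
elementary exchanges; in particular the span is preserved. -/
theorem stmt_11 (d : ℕ) (hd : 1 < d) (A : ℕ →₀ ℕ) :
    ∃ B : ℕ →₀ ℕ,
      Relation.ReflTransGen
        (fun X Y : ℕ →₀ ℕ => ∃ i, 2 * (d - 1) < X i ∧ Y = exch d i X) A B ∧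
      (∀ i, B i ≤ 2 * (d - 1)) ∧ dspan d A = dspan d B := by
  suffices H : ∀ N : ℕ, ∀ X : ℕ →₀ ℕ, X.sum (fun _ m => m) ≤ N →
      ∃ B : ℕ →₀ ℕ,
        Relation.ReflTransGen
          (fun X Y : ℕ →₀ ℕ => ∃ i, 2 * (d - 1) < X i ∧ Y = exch d i X) X B ∧
        (∀ i, B i ≤ 2 * (d - 1)) ∧ dspan d X = dspan d B from
    H _ A le_rfl
  intro N
  induction N using Nat.strong_induction_on with
  | _ N ih =>
    intro X hX
    by_cases hnorm : ∀ i, X i ≤ 2 * (d - 1)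
    · exact ⟨X, Relation.ReflTransGen.refl, hnorm, rfl⟩
    · push_neg at hnorm
      obtain ⟨i, hi⟩ := hnorm
      have hdle : d ≤ X i := by omega
      have hsplit := sum_split X i d hdle (fun _ m => m) (fun _ => rfl) (fun _ _ _ => rfl)
      have hcount : (exch d i X).sum (fun _ m => m) + d = X.sum (fun _ m => m) + 1 := by
        have := sum_move X i d (i + 1) 1 hdle (fun _ m => m) (fun _ => rfl) (fun _ _ _ => rfl)
        simpa [exch] using this
      have hlt : (exch d i X).sum (fun _ m => m) < N := by omega
      obtain ⟨B, hBrel, hBnorm, hBspan⟩ := ih _ hlt (exch d i X) le_rfl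
      exact ⟨B, Relation.ReflTransGen.head ⟨i, hi, rfl⟩ hBrel, hBnorm,
        (dspan_exch d i hd X hi).trans hBspan⟩
end
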